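/- arXiv:2403.18937 — 5 statements merged into one kernel-verified Lean document; each statement's English description precedes it below -/
import Mathlib

section
/- Let V be a real vector space with a symmetric bilinear form g of Lorentzian signature (one minus, d pluses), and let h be another symmetric bilinear form on V that is null on exactly the same vectors as g (i.e., for all v, g(v,v)=0 iff h(v,v)=0). If h is nonzero, then there exists a nonzero real constant c such that h = c·g. -/
/-!
Null vectors of `g` built from a `g`-orthonormal frame `e₀, e₁, …, e_d` force the same relations
on `h`: the null vectors `e₀ ± eᵢ` give `h(e₀, eᵢ) = 0` and `h(eᵢ, eᵢ) = -h(e₀, e₀)`, and the null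
vectors `√2 e₀ + eᵢ + eⱼ` then give `h(eᵢ, eⱼ) = 0`. Hence `h = c • g` with `c = -h(e₀, e₀)`, and
`c ≠ 0` because `h ≠ 0`.
-/

section NullCone

variable {V : Type*} [AddCommGroup V] [Module ℝ V] {g h : V →ₗ[ℝ] V →ₗ[ℝ] ℝ}

theorem apply_eq_zero_and_add_eq_zero_of_null (hh : ∀ v w, h v w = h w v)
    (hnull : ∀ v, g v v = 0 → h v v = 0) {u v : V} (huv : g u v = 0) (hvu : g v u = 0)
    (hsum : g u u + g v v = 0) : h u v = 0 ∧ h u u + h v v = 0 := by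
  have hplus := hnull (u + v) (by simp only [map_add, LinearMap.add_apply]; linarith)
  have hminus := hnull (u - v) (by simp only [map_sub, LinearMap.sub_apply]; linarith)
  simp only [map_add, map_sub, LinearMap.add_apply, LinearMap.sub_apply, hh v u] at hplus hminus
  constructor <;> linarith

theorem apply_eq_zero_of_null_of_orthonormal (hh : ∀ v w, h v w = h w v)
    (hnull : ∀ v, g v v = 0 → h v v = 0) {u v w : V} (huu : g u u = -1) (hvv : g v v = 1)
    (hww : g w w = 1) (huv : g u v = 0) (hvu : g v u = 0) (huw : g u w = 0) (hwu : g w u = 0)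
    (hvw : g v w = 0) (hwv : g w v = 0) : h v w = 0 := by
  have hv := (apply_eq_zero_and_add_eq_zero_of_null hh hnull huv hvu (by linarith)).2
  have hw := (apply_eq_zero_and_add_eq_zero_of_null hh hnull huw hwu (by linarith)).2
  have hs : √2 * √2 = 2 := Real.mul_self_sqrt zero_le_two
  have huvw := (apply_eq_zero_and_add_eq_zero_of_null (u := √2 • u) (v := v + w) hh hnull
    (by simp [huv, huw]) (by simp [hvu, hwu])
    (by simp only [map_add, map_smul, LinearMap.add_apply, LinearMap.smul_apply, smul_eq_mul]
        rw [← mul_assoc, hs]; linarith)).2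
  simp only [map_add, map_smul, LinearMap.add_apply, LinearMap.smul_apply, smul_eq_mul,
    ← mul_assoc, hs, hh w v] at huvw
  linarith

theorem apply_eq_mul_of_null_of_lorentzian {ι : Type*} [DecidableEq ι] (i₀ : ι) (e : ι → V)
    (hg : ∀ i j, g (e i) (e j) = if i = j then (if i = i₀ then (-1 : ℝ) else 1) else 0)
    (hh : ∀ v w, h v w = h w v) (hnull : ∀ v, g v v = 0 → h v v = 0) (i j : ι) :
    h (e i) (e j) = -h (e i₀) (e i₀) * g (e i) (e j) := by
  have hpair : ∀ k, k ≠ i₀ → h (e i₀) (e k) = 0 ∧ h (e i₀) (e i₀) + h (e k) (e k) = 0 :=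
    fun k hk ↦ apply_eq_zero_and_add_eq_zero_of_null hh hnull (by simp [hg, hk.symm])
      (by simp [hg, hk]) (by simp [hg, hk])
  rw [hg]
  rcases eq_or_ne i j with rfl | hij
  · rcases eq_or_ne i i₀ with rfl | hi
    · simp
    · simp only [if_true, hi, if_false]
      linarith [(hpair i hi).2]
  rw [if_neg hij, mul_zero]
  rcases eq_or_ne i i₀ with rfl | hi
  · exact (hpair j hij.symm).1
  rcases eq_or_ne j i₀ with rfl | hj
  · rw [hh]; exact (hpair i hi).1
  exact apply_eq_zero_of_null_of_orthonormal hh hnull (u := e i₀) (by simp [hg]) (by simp [hg, hi])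
    (by simp [hg, hj]) (by simp [hg, hi.symm]) (by simp [hg, hi]) (by simp [hg, hj.symm])
    (by simp [hg, hj]) (by simp [hg, hij]) (by simp [hg, hij.symm])

end NullCone

theorem stmt_0_general (d : ℕ) (V : Type*) [AddCommGroup V] [Module ℝ V]
    (g h : V →ₗ[ℝ] V →ₗ[ℝ] ℝ)
    (b : Module.Basis (Fin (d + 1)) ℝ V)
    (hg : ∀ i j, g (b i) (b j) =
      if i = j then (if i = (0 : Fin (d + 1)) then (-1 : ℝ) else 1) else 0)
    (hhsymm : ∀ v w, h v w = h w v)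
    (hnull : ∀ v : V, g v v = 0 ↔ h v v = 0)
    (hne : h ≠ 0) :
    ∃ c : ℝ, c ≠ 0 ∧ h = c • g := by
  have hcoord := apply_eq_mul_of_null_of_lorentzian 0 b hg hhsymm fun v ↦ (hnull v).mp
  have hh : h = -h (b 0) (b 0) • g := LinearMap.ext_basis b b fun i j ↦ by simp [hcoord i j]
  refine ⟨_, fun hc ↦ hne ?_, hh⟩
  rw [hh, hc, zero_smul]

theorem stmt_0 (d : ℕ) (hd : 1 ≤ d) (V : Type*) [AddCommGroup V] [Module ℝ V]
    (g h : V →ₗ[ℝ] V →ₗ[ℝ] ℝ)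
    (b : Module.Basis (Fin (d + 1)) ℝ V)
    (hg : ∀ i j, g (b i) (b j) =
      if i = j then (if i = (0 : Fin (d + 1)) then (-1 : ℝ) else 1) else 0)
    (hgsymm : ∀ v w, g v w = g w v)
    (hhsymm : ∀ v w, h v w = h w v)
    (hnull : ∀ v : V, g v v = 0 ↔ h v v = 0)
    (hne : h ≠ 0) :
    ∃ c : ℝ, c ≠ 0 ∧ h = c • g :=
  stmt_0_general d V g h b hg hhsymm hnull hne
end

section
/- Let g be a Lorentzian bilinear form on a real vector space V with a basis consisting of null vectors k, ℓ with g(k,ℓ) = -1, g(k,k) = g(ℓ,ℓ) = 0, and spacelike vectors s₁,…,s_{d-1} with g(sⱼ,s_m) = δ_{jm}, g(k,sⱼ) = g(ℓ,sⱼ) = 0. If h is a symmetric bilinear form with the same null vectors as g, then for every j: h(ℓ,sⱼ) = 0. -/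
/-!
If `g ℓ ℓ = 0`, `g ℓ s = g s ℓ = 0` and `g s s ≠ 0`, then `h s s ≠ 0`, so one can choose `t` making
`t • s + ℓ` null for `h`; it is then null for `g`, i.e. `t² g(s,s) = 0`, forcing `t = 0`, and the
choice of `t` makes this say that `h(s,ℓ) + h(ℓ,s) = 0`.
-/

namespace LinearMap

variable {K V : Type*} [Field K] [AddCommGroup V] [Module K V]

theorem apply_smul_add_self (B : V →ₗ[K] V →ₗ[K] K) (t : K) (s ℓ : V) :
    B (t • s + ℓ) (t • s + ℓ) = t ^ 2 * B s s + t * (B s ℓ + B ℓ s) + B ℓ ℓ := by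
  simp only [map_add, map_smul, add_apply, smul_apply, smul_eq_mul]
  ring

theorem apply_add_apply_swap_eq_zero_of_same_null_vectors (B C : V →ₗ[K] V →ₗ[K] K)
    (hnull : ∀ v, B v v = 0 ↔ C v v = 0) {s ℓ : V}
    (hℓℓ : B ℓ ℓ = 0) (hℓs : B ℓ s = 0) (hsℓ : B s ℓ = 0) (hss : B s s ≠ 0) :
    C s ℓ + C ℓ s = 0 := by
  have hCss : C s s ≠ 0 := fun h0 ↦ hss ((hnull s).mpr h0)
  have hCℓℓ : C ℓ ℓ = 0 := (hnull ℓ).mp hℓℓ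
  set t := -(C s ℓ + C ℓ s) / C s s with ht
  have hC : C (t • s + ℓ) (t • s + ℓ) = 0 := by
    rw [apply_smul_add_self, hCℓℓ, ht]
    field_simp
    ring
  have hB : t ^ 2 * B s s = 0 := by
    simpa [apply_smul_add_self, hℓℓ, hℓs, hsℓ] using (hnull _).mpr hC
  have ht0 : t = 0 := pow_eq_zero_iff two_ne_zero |>.mp ((mul_eq_zero.mp hB).resolve_right hss)
  rw [ht, div_eq_zero_iff, neg_eq_zero] at ht0
  exact ht0.resolve_right hCss

end LinearMap

theorem stmt_1 (d : ℕ) (V : Type*) [AddCommGroup V] [Module ℝ V]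
    (g h : V →ₗ[ℝ] V →ₗ[ℝ] ℝ)
    (ℓ : V) (s : Fin (d - 1) → V)
    (hgsymm : ∀ v w, g v w = g w v)
    (hll : g ℓ ℓ = 0)
    (hss : ∀ j m, g (s j) (s m) = if j = m then (1 : ℝ) else 0)
    (hls : ∀ j, g ℓ (s j) = 0)
    (hhsymm : ∀ v w, h v w = h w v)
    (hnull : ∀ v : V, g v v = 0 ↔ h v v = 0) :
    ∀ j, h ℓ (s j) = 0 := by
  intro j
  have hsum := LinearMap.apply_add_apply_swap_eq_zero_of_same_null_vectors g h hnull hll (hls j)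
    ((hgsymm _ _).trans (hls j)) (by simp [hss])
  rw [hhsymm (s j)] at hsum
  linarith
end

section
/- Let g be a Lorentzian bilinear form on V with null frame (k, ℓ, s₁,…,s_{d-1}) satisfying g(k,ℓ) = -1, g(k,k) = g(ℓ,ℓ) = 0, g(sⱼ,s_m) = δ_{jm}, and g of the sⱼ with k and ℓ zero. If h is a symmetric bilinear form with the same null cone as g, and h(k,sⱼ) = h(ℓ,sⱼ) = 0 for all j, then h(sⱼ,sⱼ) = -h(k,ℓ) for every j. -/
/-!
When `k, ℓ` are null and orthogonal to `s` for a symmetric form `B`, the vector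
`v = s + k + t ℓ` has `B(v,v) = B(s,s) + 2t B(k,ℓ)`. Choosing `t` so that `v` is `g`-null
(for the given frame, `t = ½`), `v` is also `h`-null, and the two vanishing expansions give
`h(s,s) g(k,ℓ) = h(k,ℓ) g(s,s)`.
-/

namespace LinearMap.BilinForm

variable {V : Type*} [AddCommGroup V] [Module ℝ V]

lemma apply_add_add_smul_self (B : LinearMap.BilinForm ℝ V) (hB : ∀ v w, B v w = B w v)
    {k ℓ s : V} (hkk : B k k = 0) (hℓℓ : B ℓ ℓ = 0) (hks : B k s = 0) (hℓs : B ℓ s = 0)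
    (t : ℝ) :
    B (s + k + t • ℓ) (s + k + t • ℓ) = B s s + 2 * t * B k ℓ := by
  simp only [map_add, map_smul, LinearMap.add_apply, LinearMap.smul_apply, smul_eq_mul]
  rw [hB s k, hB s ℓ, hB ℓ k, hkk, hℓℓ, hks, hℓs]
  ring

lemma apply_self_mul_eq_of_null_iff (g h : LinearMap.BilinForm ℝ V)
    (hg : ∀ v w, g v w = g w v) (hh : ∀ v w, h v w = h w v)
    (hnull : ∀ v, g v v = 0 ↔ h v v = 0)
    {k ℓ s : V} (hkk : g k k = 0) (hℓℓ : g ℓ ℓ = 0) (hkℓ : g k ℓ ≠ 0)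
    (hgks : g k s = 0) (hgℓs : g ℓ s = 0) (hhks : h k s = 0) (hhℓs : h ℓ s = 0) :
    h s s * g k ℓ = h k ℓ * g s s := by
  set t := -g s s / (2 * g k ℓ) with ht
  have hgv : g (s + k + t • ℓ) (s + k + t • ℓ) = 0 := by
    rw [apply_add_add_smul_self g hg hkk hℓℓ hgks hgℓs, ht]
    field_simp
    ring
  have hhv := (hnull _).1 hgv
  rw [apply_add_add_smul_self h hh ((hnull k).1 hkk) ((hnull ℓ).1 hℓℓ) hhks hhℓs, ht] at hhv
  field_simp at hhv
  linarith

end LinearMap.BilinForm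

theorem stmt_2 (d : ℕ) (V : Type*) [AddCommGroup V] [Module ℝ V]
    (g h : V →ₗ[ℝ] V →ₗ[ℝ] ℝ)
    (k ℓ : V) (s : Fin (d - 1) → V)
    (hgsymm : ∀ v w, g v w = g w v)
    (hkl : g k ℓ = -1) (hkk : g k k = 0) (hll : g ℓ ℓ = 0)
    (hss : ∀ j m, g (s j) (s m) = if j = m then (1 : ℝ) else 0)
    (hks : ∀ j, g k (s j) = 0) (hls : ∀ j, g ℓ (s j) = 0)
    (hhsymm : ∀ v w, h v w = h w v)
    (hnull : ∀ v : V, g v v = 0 ↔ h v v = 0)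
    (hhks : ∀ j, h k (s j) = 0) (hhls : ∀ j, h ℓ (s j) = 0) :
    ∀ j, h (s j) (s j) = -h k ℓ := by
  intro j
  have key := LinearMap.BilinForm.apply_self_mul_eq_of_null_iff g h hgsymm hhsymm hnull
    hkk hll (by rw [hkl]; norm_num) (hks j) (hls j) (hhks j) (hhls j)
  rw [hkl, hss j j, if_pos rfl] at key
  linarith
end

section
/- A linear map T between real vector spaces equipped with Lorentzian bilinear forms g and g' that sends g-null vectors to g'-null vectors, and is bijective, must be a conformal map: there exists c > 0 or c < 0 with g'(Tv, Tw) = c·g(v,w) for all v, w (c nonzero). -/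
/-!
Let `h v w := g' (T v) (T w)`. In a Minkowski basis `e₀, …, e_d` of `g`, the vectors
`e₀ ± eᵢ` and `5 e₀ + 3 eᵢ + 4 eⱼ` are null, so `h` vanishes on them. Expanding these
conditions shows that `h` is diagonal in this basis with `h(eᵢ, eᵢ) = -h(e₀, e₀)`, i.e.
`h = c • g` with `c = -h(e₀, e₀)`. Surjectivity of `T` makes `c` nonzero, since `g'` itself is
not identically zero on the diagonal.
-/

namespace Minkowski

variable {K V : Type*} [Field K] [CharZero K] [AddCommGroup V] [Module K V] {n : ℕ}
  {g h : V →ₗ[K] V →ₗ[K] K} {b : Module.Basis (Fin (n + 1)) K V}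

variable (hg : ∀ i j, g (b i) (b j) = if i = j then (if i = 0 then (-1 : K) else 1) else 0)
  (hsymm : ∀ v w, h v w = h w v) (hnull : ∀ v, g v v = 0 → h v v = 0)
include hg hsymm hnull

theorem apply_zero_eq_zero_and_apply_self {i : Fin (n + 1)} (hi : i ≠ 0) :
    h (b 0) (b i) = 0 ∧ h (b i) (b i) = -h (b 0) (b 0) := by
  have hplus := hnull (b 0 + b i) (by simp [hg, hi, hi.symm])
  have hminus := hnull (b 0 - b i) (by simp [hg, hi, hi.symm])
  simp only [map_add, map_sub, LinearMap.add_apply, LinearMap.sub_apply,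
    hsymm (b i) (b 0)] at hplus hminus
  constructor
  · linear_combination (hplus - hminus) / 4
  · linear_combination (hplus + hminus) / 2

theorem apply_eq_zero_of_ne {i j : Fin (n + 1)} (hi : i ≠ 0) (hj : j ≠ 0) (hij : i ≠ j) :
    h (b i) (b j) = 0 := by
  obtain ⟨h0i, hii⟩ := apply_zero_eq_zero_and_apply_self hg hsymm hnull hi
  obtain ⟨h0j, hjj⟩ := apply_zero_eq_zero_and_apply_self hg hsymm hnull hj
  -- `5² = 3² + 4²`
  have hpyth := hnull ((5 : K) • b 0 + (3 : K) • b i + (4 : K) • b j) (by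
    norm_num [hg, hi, hj, hij, hi.symm, hj.symm, hij.symm])
  simp only [map_add, map_smul, LinearMap.add_apply, LinearMap.smul_apply, smul_eq_mul,
    hsymm (b i) (b 0), hsymm (b j) (b 0), hsymm (b j) (b i), h0i, h0j, hii, hjj] at hpyth
  linear_combination hpyth / 24

theorem eq_smul : h = (-h (b 0) (b 0)) • g := by
  refine LinearMap.ext_basis b b fun i j => ?_
  simp only [LinearMap.smul_apply, smul_eq_mul, hg]
  rcases eq_or_ne i 0 with rfl | hi <;> rcases eq_or_ne j 0 with rfl | hj
  · simp
  · simp [hj.symm, (apply_zero_eq_zero_and_apply_self hg hsymm hnull hj).1]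
  · simp [hi, hsymm (b i), (apply_zero_eq_zero_and_apply_self hg hsymm hnull hi).1]
  · rcases eq_or_ne i j with rfl | hij
    · simp [hi, (apply_zero_eq_zero_and_apply_self hg hsymm hnull hi).2]
    · simp [hij, apply_eq_zero_of_ne hg hsymm hnull hi hj hij]

end Minkowski

theorem stmt_3_general (d : ℕ) (V W : Type*) [AddCommGroup V] [Module ℝ V]
    [AddCommGroup W] [Module ℝ W]
    (g : V →ₗ[ℝ] V →ₗ[ℝ] ℝ) (g' : W →ₗ[ℝ] W →ₗ[ℝ] ℝ)
    (bV : Module.Basis (Fin (d + 1)) ℝ V) (bW : Module.Basis (Fin (d + 1)) ℝ W)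
    (hg'symm : ∀ v w, g' v w = g' w v)
    (hg : ∀ i j, g (bV i) (bV j) =
      if i = j then (if i = (0 : Fin (d + 1)) then (-1 : ℝ) else 1) else 0)
    (hg' : ∀ i j, g' (bW i) (bW j) =
      if i = j then (if i = (0 : Fin (d + 1)) then (-1 : ℝ) else 1) else 0)
    (T : V →ₗ[ℝ] W) (hT : Function.Bijective T)
    (hnull : ∀ v : V, g v v = 0 → g' (T v) (T v) = 0) :
    ∃ c : ℝ, c ≠ 0 ∧ ∀ v w, g' (T v) (T w) = c * g v w := by
  have hconf := Minkowski.eq_smul (h := g'.compl₁₂ T T) hg (fun v w => hg'symm (T v) (T w)) hnull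
  refine ⟨_, fun hc => ?_, fun v w => LinearMap.congr_fun₂ hconf v w⟩
  obtain ⟨v, hv⟩ := hT.2 (bW 0)
  have hvv := LinearMap.congr_fun₂ hconf v v
  rw [hc, zero_smul, LinearMap.compl₁₂_apply, hv, hg'] at hvv
  simp at hvv

theorem stmt_3 (d : ℕ) (hd : 1 ≤ d) (V W : Type*) [AddCommGroup V] [Module ℝ V]
    [AddCommGroup W] [Module ℝ W]
    (g : V →ₗ[ℝ] V →ₗ[ℝ] ℝ) (g' : W →ₗ[ℝ] W →ₗ[ℝ] ℝ)
    (bV : Module.Basis (Fin (d + 1)) ℝ V) (bW : Module.Basis (Fin (d + 1)) ℝ W)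
    (hgsymm : ∀ v w, g v w = g w v) (hg'symm : ∀ v w, g' v w = g' w v)
    (hg : ∀ i j, g (bV i) (bV j) =
      if i = j then (if i = (0 : Fin (d + 1)) then (-1 : ℝ) else 1) else 0)
    (hg' : ∀ i j, g' (bW i) (bW j) =
      if i = j then (if i = (0 : Fin (d + 1)) then (-1 : ℝ) else 1) else 0)
    (T : V →ₗ[ℝ] W) (hT : Function.Bijective T)
    (hnull : ∀ v : V, g v v = 0 → g' (T v) (T v) = 0) :
    ∃ c : ℝ, c ≠ 0 ∧ ∀ v w, g' (T v) (T w) = c * g v w :=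
  stmt_3_general d V W g g' bV bW hg'symm hg hg' T hT hnull
end

section
/- Let f : ℂ² ∖ {0} → ℂ be holomorphic (continuous and separately holomorphic in each variable). Then f extends to a holomorphic function on all of ℂ² (Hartogs' extension for a point singularity in dimension 2). -/
/-!
Away from the origin `f` is jointly holomorphic by Osgood's lemma: its partial derivatives are
Cauchy integrals over small circles, hence jointly continuous, and continuous partial derivatives
give a Fréchet derivative. Near the origin take
`f̂(z, w) = (2πi)⁻¹ ∮_{|ζ|=1} f(ζ, w) / (ζ - z) dζ`, which only samples `f` on `{|ζ| = 1} × ℂ`,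
where `f` is continuous. For `w ≠ 0` the one-variable Cauchy formula gives `f̂ = f`, and by
continuity this persists on all of `({|z| < 1} × ℂ) \ {0}`. The function `f̂` is holomorphic in
`z`, and in `w` it is holomorphic off `w = 0` and continuous, hence holomorphic by Riemann's
removable singularity theorem; Osgood's lemma again makes it jointly holomorphic.
-/

open Complex Metric Set Filter Topology Real ContinuousLinearMap
open scoped NNReal

variable {E : Type*} [NormedAddCommGroup E] [NormedSpace ℂ E]

theorem continuousOn_circleIntegral {X : Type*} [TopologicalSpace X] {s : Set X}
    {c : X → ℂ} {R : ℝ} {g : X → ℂ → E} (hR : 0 ≤ R) (hc : ContinuousOn c s)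
    (hg : ContinuousOn (Function.uncurry g) {q | q.1 ∈ s ∧ q.2 ∈ sphere (c q.1) R}) :
    ContinuousOn (fun x => ∮ ζ in C(c x, R), g x ζ) s := by
  rw [continuousOn_iff_continuous_domRestrict] at hc ⊢
  simp only [circleIntegral, deriv_circleMap]
  refine intervalIntegral.continuous_parametric_intervalIntegral_of_continuous' ?_ _ _
  have hcircle : Continuous fun q : s × ℝ => circleMap (c q.1) R q.2 := by
    simp only [circleMap]
    exact (hc.comp continuous_fst).add (continuous_const.mul (by fun_prop))
  refine (((continuous_circleMap 0 R).comp continuous_snd).mul continuous_const).smul ?_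
  refine hg.comp_continuous (continuous_subtype_val.comp continuous_fst |>.prodMk hcircle) ?_
  exact fun q => ⟨q.1.2, circleMap_mem_sphere _ hR _⟩

noncomputable def cauchyExtension (f : ℂ × ℂ → E) (p : ℂ × ℂ) : E :=
  (2 * π * I : ℂ)⁻¹ • ∮ ζ in C(0, 1), (ζ - p.1)⁻¹ • f (ζ, p.2)

theorem continuousOn_cauchyExtension {f : ℂ × ℂ → E} (hc : ContinuousOn f {p | p ≠ 0}) :
    ContinuousOn (cauchyExtension f) (ball 0 1 ×ˢ univ) := by
  refine (continuousOn_circleIntegral zero_le_one continuousOn_const ?_).const_smul _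
  refine ContinuousOn.smul ?_ ?_
  · refine (by fun_prop : Continuous fun x : (ℂ × ℂ) × ℂ => x.2 - x.1.1).continuousOn.inv₀ ?_
    rintro ⟨q, ζ⟩ ⟨⟨hq, -⟩, hζ⟩ h
    rw [sub_eq_zero] at h
    rw [mem_sphere_zero_iff_norm, h] at hζ
    exact (mem_ball_zero_iff.1 hq).ne hζ
  · refine hc.comp (by fun_prop) fun x hx h => ?_
    simp_all [Prod.ext_iff]

variable [CompleteSpace E]

theorem continuousOn_deriv_fst_of_separately {f : ℂ × ℂ → E} {U : Set (ℂ × ℂ)} (hU : IsOpen U)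
    (hc : ContinuousOn f U) (hd : ∀ p ∈ U, DifferentiableAt ℂ (fun z => f (z, p.2)) p.1) :
    ContinuousOn (fun p : ℂ × ℂ => deriv (fun z => f (z, p.2)) p.1) U := by
  refine continuousOn_of_locally_continuousOn fun p hp => ?_
  obtain ⟨ρ, hρ, hball⟩ := Metric.isOpen_iff.1 hU p hp
  set r := ρ / 2 with hr_def
  have hr : 0 < r := by positivity
  refine ⟨ball p r, isOpen_ball, mem_ball_self hr, ?_⟩
  have hslice : ∀ q ∈ ball p r, ∀ ζ ∈ closedBall q.1 r, (ζ, q.2) ∈ U := by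
    intro q hq ζ hζ
    refine hball (lt_of_le_of_lt (dist_triangle _ q _) ?_)
    have hdist : dist (ζ, q.2) q = dist ζ q.1 := by simp [Prod.dist_eq]
    rw [hdist]
    rw [mem_ball] at hq
    rw [mem_closedBall] at hζ
    linarith
  have hcauchy : EqOn (fun q : ℂ × ℂ => (2 * π * I : ℂ)⁻¹ •
      ∮ ζ in C(q.1, r), (1 / (ζ - q.1) ^ 2) • f (ζ, q.2))
      (fun p : ℂ × ℂ => deriv (fun z => f (z, p.2)) p.1) (U ∩ ball p r) := by
    intro q ⟨_, hq⟩
    have hdiff : DifferentiableOn ℂ (fun z => f (z, q.2)) (closedBall q.1 r) :=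
      fun ζ hζ => (hd _ (hslice q hq ζ hζ)).differentiableWithinAt
    simp only [hdiff.deriv_eq_smul_circleIntegral hr, smul_smul,
      inv_mul_cancel₀ two_pi_I_ne_zero, one_smul]
  refine ContinuousOn.congr (ContinuousOn.const_smul ?_ _) hcauchy.symm
  refine continuousOn_circleIntegral hr.le continuousOn_fst ?_
  refine ContinuousOn.smul ?_ ?_
  · refine continuousOn_const.div (by fun_prop) fun x hx => ?_
    exact pow_ne_zero _ (sub_ne_zero.2 (ne_of_mem_sphere hx.2 hr.ne'))
  · exact hc.comp (by fun_prop) fun x hx => hslice x.1 hx.1.2 x.2 (sphere_subset_closedBall hx.2)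

theorem continuousOn_deriv_snd_of_separately {f : ℂ × ℂ → E} {U : Set (ℂ × ℂ)} (hU : IsOpen U)
    (hc : ContinuousOn f U) (hd : ∀ p ∈ U, DifferentiableAt ℂ (fun w => f (p.1, w)) p.2) :
    ContinuousOn (fun p : ℂ × ℂ => deriv (fun w => f (p.1, w)) p.2) U :=
  (continuousOn_deriv_fst_of_separately (f := f ∘ Prod.swap) (hU.preimage continuous_swap)
    (hc.comp continuous_swap.continuousOn fun _ h => h) fun p hp => hd p.swap hp).comp
    continuous_swap.continuousOn fun _ h => h

theorem differentiableOn_of_continuousOn_of_separately {f : ℂ × ℂ → E} {U : Set (ℂ × ℂ)}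
    (hU : IsOpen U) (hc : ContinuousOn f U)
    (h₁ : ∀ p ∈ U, DifferentiableAt ℂ (fun z => f (z, p.2)) p.1)
    (h₂ : ∀ p ∈ U, DifferentiableAt ℂ (fun w => f (p.1, w)) p.2) : DifferentiableOn ℂ f U := by
  intro p hp
  have hUp : U ∈ 𝓝 p := hU.mem_nhds hp
  have hstrict := hasStrictFDerivAt_uncurry_coprod (f := Function.curry f)
    (f₁ := fun z w => toSpanSingleton ℂ (deriv (fun z => f (z, w)) z))
    (f₂ := fun z w => toSpanSingleton ℂ (deriv (fun w => f (z, w)) w))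
    (eventually_of_mem hUp fun q hq => (h₁ q hq).hasDerivAt)
    (eventually_of_mem hUp fun q hq => (h₂ q hq).hasDerivAt)
    ((toSpanSingletonCLE.continuous.comp_continuousOn
      (continuousOn_deriv_fst_of_separately hU hc h₁)).continuousAt hUp)
    ((toSpanSingletonCLE.continuous.comp_continuousOn
      (continuousOn_deriv_snd_of_separately hU hc h₂)).continuousAt hUp)
  exact hstrict.differentiableAt.differentiableWithinAt

theorem cauchyExtension_eq_of_snd_ne_zero {f : ℂ × ℂ → E}
    (h₁ : ∀ p : ℂ × ℂ, p ≠ 0 → DifferentiableAt ℂ (fun z => f (z, p.2)) p.1)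
    {p : ℂ × ℂ} (hp₁ : p.1 ∈ ball 0 1) (hp₂ : p.2 ≠ 0) : cauchyExtension f p = f p := by
  have hdiff : Differentiable ℂ fun z => f (z, p.2) := fun z => h₁ (z, p.2) (by simp [hp₂])
  exact hdiff.diffContOnCl.two_pi_i_inv_smul_circleIntegral_sub_inv_smul hp₁

theorem eqOn_cauchyExtension {f : ℂ × ℂ → E} (hc : ContinuousOn f {p | p ≠ 0})
    (h₁ : ∀ p : ℂ × ℂ, p ≠ 0 → DifferentiableAt ℂ (fun z => f (z, p.2)) p.1) :
    EqOn (cauchyExtension f) f ((ball 0 1 ×ˢ univ) \ {0}) := by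
  refine EqOn.of_subset_closure (s := ball 0 1 ×ˢ {0}ᶜ)
    (fun p hp => cauchyExtension_eq_of_snd_ne_zero h₁ hp.1 hp.2)
    ((continuousOn_cauchyExtension hc).mono sdiff_subset)
    (hc.mono fun p hp => hp.2) ?_ ?_
  · rintro p ⟨hp₁, hp₂⟩
    exact ⟨⟨hp₁, mem_univ _⟩, fun h => hp₂ (congrArg Prod.snd (mem_singleton_iff.1 h))⟩
  · rw [closure_prod_eq, closure_compl_singleton]
    exact sdiff_subset.trans (prod_mono subset_closure subset_rfl)

theorem differentiableAt_cauchyExtension_fst {f : ℂ × ℂ → E} (hc : ContinuousOn f {p | p ≠ 0})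
    (w : ℂ) {z : ℂ} (hz : z ∈ ball 0 1) :
    DifferentiableAt ℂ (fun z => cauchyExtension f (z, w)) z := by
  have hint : CircleIntegrable (fun ζ => f (ζ, w)) 0 1 := by
    refine ContinuousOn.circleIntegrable zero_le_one (hc.comp (by fun_prop) fun ζ hζ h => ?_)
    simp_all [Prod.ext_iff]
  have hz' : z ∈ eball (0 : ℂ) (1 : ℝ≥0) := by
    rw [eball_coe]
    exact_mod_cast hz
  exact ((hasFPowerSeriesOn_cauchy_integral hint one_pos).analyticAt_of_mem hz').differentiableAt

theorem differentiable_cauchyExtension_snd {f : ℂ × ℂ → E} (hc : ContinuousOn f {p | p ≠ 0})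
    (h₁ : ∀ p : ℂ × ℂ, p ≠ 0 → DifferentiableAt ℂ (fun z => f (z, p.2)) p.1)
    (h₂ : ∀ p : ℂ × ℂ, p ≠ 0 → DifferentiableAt ℂ (fun w => f (p.1, w)) p.2)
    {z : ℂ} (hz : z ∈ ball 0 1) : Differentiable ℂ fun w => cauchyExtension f (z, w) := by
  rw [← differentiableOn_univ,
    ← differentiableOn_compl_singleton_and_continuousAt_iff (c := 0) univ_mem]
  constructor
  · rintro w ⟨-, hw⟩
    have heq : (fun w => f (z, w)) =ᶠ[𝓝 w] fun w => cauchyExtension f (z, w) := by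
      filter_upwards [isOpen_ne.mem_nhds hw] with w' hw'
      exact (cauchyExtension_eq_of_snd_ne_zero h₁ hz hw').symm
    exact ((h₂ (z, w) (by simp_all)).congr_of_eventuallyEq heq.symm).differentiableWithinAt
  · have hnhds : ball 0 1 ×ˢ univ ∈ 𝓝 (z, (0 : ℂ)) :=
      prod_mem_nhds (isOpen_ball.mem_nhds hz) univ_mem
    exact ((continuousOn_cauchyExtension hc).continuousAt hnhds).comp
      (Continuous.prodMk_right z).continuousAt

theorem differentiableOn_cauchyExtension {f : ℂ × ℂ → E} (hc : ContinuousOn f {p | p ≠ 0})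
    (h₁ : ∀ p : ℂ × ℂ, p ≠ 0 → DifferentiableAt ℂ (fun z => f (z, p.2)) p.1)
    (h₂ : ∀ p : ℂ × ℂ, p ≠ 0 → DifferentiableAt ℂ (fun w => f (p.1, w)) p.2) :
    DifferentiableOn ℂ (cauchyExtension f) (ball 0 1 ×ˢ univ) :=
  differentiableOn_of_continuousOn_of_separately (isOpen_ball.prod isOpen_univ)
    (continuousOn_cauchyExtension hc)
    (fun p hp => differentiableAt_cauchyExtension_fst hc p.2 hp.1)
    (fun p hp => differentiable_cauchyExtension_snd hc h₁ h₂ hp.1 p.2)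

theorem stmt_5 (f : ℂ × ℂ → ℂ)
    (hcont : ContinuousOn f {p : ℂ × ℂ | p ≠ 0})
    (hsep : ∀ p : ℂ × ℂ, p ≠ 0 →
      DifferentiableAt ℂ (fun z => f (z, p.2)) p.1 ∧
      DifferentiableAt ℂ (fun w => f (p.1, w)) p.2) :
    ∃ F : ℂ × ℂ → ℂ, Differentiable ℂ F ∧ ∀ p : ℂ × ℂ, p ≠ 0 → F p = f p := by
  have h₁ := fun p hp => (hsep p hp).1
  have h₂ := fun p hp => (hsep p hp).2
  have hV : ball (0 : ℂ) 1 ×ˢ univ ∈ 𝓝 (0 : ℂ × ℂ) :=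
    prod_mem_nhds (ball_mem_nhds 0 one_pos) univ_mem
  refine ⟨Function.update f 0 (cauchyExtension f 0), fun p => ?_,
    fun p hp => Function.update_of_ne hp _ _⟩
  rcases eq_or_ne p 0 with rfl | hp
  · have heq : Function.update f 0 (cauchyExtension f 0) =ᶠ[𝓝 0] cauchyExtension f := by
      filter_upwards [hV] with q hq
      rcases eq_or_ne q 0 with rfl | hq₀
      · exact Function.update_self _ _ _
      · rw [Function.update_of_ne hq₀, eqOn_cauchyExtension hcont h₁ ⟨hq, hq₀⟩]
    exact ((differentiableOn_cauchyExtension hcont h₁ h₂).differentiableAt hV).congr_of_eventuallyEq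
      heq
  · have heq : Function.update f 0 (cauchyExtension f 0) =ᶠ[𝓝 p] f := by
      filter_upwards [isOpen_ne.mem_nhds hp] with q hq using Function.update_of_ne hq _ _
    exact ((differentiableOn_of_continuousOn_of_separately isOpen_ne hcont h₁ h₂).differentiableAt
      (isOpen_ne.mem_nhds hp)).congr_of_eventuallyEq heq
end
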